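/- Let W = W(Γ) be the right-angled Coxeter group of a simple graph Γ with word length ℓ. Let w₁, w₂, w₃, v₁, v₂ ∈ W satisfy ℓ(w₁·w₂·w₃) = ℓ(w₁) + ℓ(w₂) + ℓ(w₃), ℓ(v₁·v₂) = ℓ(v₁) + ℓ(v₂), ℓ(v₁) = ℓ(w₂·w₃) + ℓ(w₂·w₃·v₁), and ℓ(w₁·w₃·v₁·v₂) = ℓ(w₁) + ℓ(w₃·v₁·v₂). Then ℓ(w₁·w₃·v₁) = ℓ(w₁) + ℓ(w₃·v₁) and ℓ(w₁·w₃·v₁·v₂) = ℓ(w₁·w₃·v₁) + ℓ(v₂). -/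

import Mathlib

/-!
Everything follows from the triangle inequality `ℓ(xy) ≤ ℓ(x) + ℓ(y)` and `ℓ(x⁻¹) = ℓ(x)`.
Additivity of `ℓ(w₂ w₃)` together with `h₃` shows that `w₃⁻¹` is a reduced prefix of `v₁`;
then `w₃ v₁ · v₂` is reduced because `v₁ · v₂` is, and finally the reduced product
`w₁ · (w₃ v₁ · v₂)` stays reduced when split at any point.
-/

namespace RACG

variable {V : Type*} [DecidableEq V]

/-- The right-angled Coxeter matrix of a simple graph `G`: diagonal entries are `1`,
entries at adjacent pairs are `2` (the generators commute), and entries at distinct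
non-adjacent pairs are `0` (representing `∞`, i.e. no relation). -/
def racgMatrix (G : SimpleGraph V) [DecidableRel G.Adj] : CoxeterMatrix V where
  M a b := if a = b then 1 else if G.Adj a b then 2 else 0
  isSymm := by
    refine Matrix.ext fun a b => ?_
    show (if b = a then (1 : ℕ) else if G.Adj b a then 2 else 0) =
      (if a = b then 1 else if G.Adj a b then 2 else 0)
    by_cases h : a = b
    · subst h; rfl
    · rw [if_neg h, if_neg (Ne.symm h)]
      by_cases hadj : G.Adj a b
      · rw [if_pos hadj, if_pos hadj.symm]
      · rw [if_neg hadj, if_neg (fun h' => hadj h'.symm)]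
  diagonal := fun i => by simp
  off_diagonal := fun i i' h => by
    show (if i = i' then (1 : ℕ) else if G.Adj i i' then 2 else 0) ≠ 1
    rw [if_neg h]
    by_cases hadj : G.Adj i i' <;> simp [hadj]

variable {G : SimpleGraph V} [DecidableRel G.Adj] {W : Type*} [Group W]

/-- In the right-angled Coxeter group of `G`, the simple reflections at adjacent
vertices commute. -/
theorem simple_commute_of_adj (cs : CoxeterSystem (racgMatrix G) W) {a b : V}
    (h : G.Adj a b) : Commute (cs.simple a) (cs.simple b) := by
  have hM : (racgMatrix G) a b = 2 := by
    simp only [racgMatrix, if_neg h.ne, if_pos h]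
  have h2 := cs.simple_mul_simple_pow a b
  rw [hM, pow_two] at h2
  have h3 := mul_eq_one_iff_eq_inv.mp h2
  rwa [mul_inv_rev, cs.inv_simple, cs.inv_simple] at h3

/-- The clique word associated to a finite set `C` of pairwise adjacent vertices:
the product of the simple reflections at the vertices of `C` (in any order; these
commute). If `C` is not a clique, we set the value to `1` by convention. -/
noncomputable def cliqueWord (cs : CoxeterSystem (racgMatrix G) W) (C : Finset V) : W :=
  if h : (C : Set V).Pairwise G.Adj then
    C.noncommProd (fun v => cs.simple v)
      (fun _ ha _ hb hab => simple_commute_of_adj cs (h ha hb hab))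
  else 1

/-- `w` is a clique word if it is the product of the simple reflections over a finite
set of pairwise adjacent vertices. -/
def IsCliqueWord (cs : CoxeterSystem (racgMatrix G) W) (w : W) : Prop :=
  ∃ C : Finset V, (C : Set V).Pairwise G.Adj ∧ w = cliqueWord cs C

end RACG

namespace CoxeterSystem

variable {B : Type*} {M : CoxeterMatrix B} {W : Type*} [Group W] (cs : CoxeterSystem M W)

local prefix:100 "ℓ" => cs.length

theorem length_mul_of_length_mul_mul {x y z : W} (h : ℓ (x * y * z) = ℓ x + ℓ y + ℓ z) :
    ℓ (y * z) = ℓ y + ℓ z := by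
  have hxyz : ℓ (x * y * z) ≤ ℓ x + ℓ (y * z) := by
    rw [mul_assoc]
    exact cs.length_mul_le x (y * z)
  have := cs.length_mul_le y z
  omega

theorem length_eq_length_add_length_mul_of_length_eq {x y v : W}
    (hxy : ℓ (x * y) = ℓ x + ℓ y) (hv : ℓ v = ℓ (x * y) + ℓ (x * y * v)) :
    ℓ v = ℓ y + ℓ (y * v) := by
  have hyv : ℓ (y * v) ≤ ℓ (x * y * v) + ℓ x := by
    simpa only [mul_assoc] using cs.length_le_length_mul_add_left x (y * v)
  have := cs.length_le_length_mul_add_left y v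
  omega

theorem length_mul_mul_of_length_eq {y v u : W} (hv : ℓ v = ℓ y + ℓ (y * v))
    (hvu : ℓ (v * u) = ℓ v + ℓ u) : ℓ (y * v * u) = ℓ (y * v) + ℓ u := by
  have hyvu : ℓ (v * u) ≤ ℓ (y * v * u) + ℓ y := by
    simpa only [mul_assoc] using cs.length_le_length_mul_add_left y (v * u)
  have := cs.length_mul_le (y * v) u
  omega

theorem length_mul_and_length_mul_mul_of_length_mul_mul {x z u : W}
    (hxzu : ℓ (x * z * u) = ℓ x + ℓ (z * u)) (hzu : ℓ (z * u) = ℓ z + ℓ u) :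
    ℓ (x * z) = ℓ x + ℓ z ∧ ℓ (x * z * u) = ℓ (x * z) + ℓ u := by
  have := cs.length_mul_le (x * z) u
  have := cs.length_mul_le x z
  omega

end CoxeterSystem

theorem length_combined_action
    {V : Type*} [DecidableEq V] (G : SimpleGraph V) [DecidableRel G.Adj]
    {W : Type*} [Group W] (cs : CoxeterSystem (RACG.racgMatrix G) W)
    (w₁ w₂ w₃ v₁ v₂ : W)
    (h₁ : cs.length (w₁ * w₂ * w₃) = cs.length w₁ + cs.length w₂ + cs.length w₃)
    (h₂ : cs.length (v₁ * v₂) = cs.length v₁ + cs.length v₂)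
    (h₃ : cs.length v₁ = cs.length (w₂ * w₃) + cs.length (w₂ * w₃ * v₁))
    (h₄ : cs.length (w₁ * w₃ * v₁ * v₂) = cs.length w₁ + cs.length (w₃ * v₁ * v₂)) :
    cs.length (w₁ * w₃ * v₁) = cs.length w₁ + cs.length (w₃ * v₁) ∧
      cs.length (w₁ * w₃ * v₁ * v₂) = cs.length (w₁ * w₃ * v₁) + cs.length v₂ := by
  have hw₂w₃ := cs.length_mul_of_length_mul_mul h₁
  have hv₁ := cs.length_eq_length_add_length_mul_of_length_eq hw₂w₃ h₃
  have hw₃v₁v₂ := cs.length_mul_mul_of_length_eq hv₁ h₂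
  rw [mul_assoc w₁ w₃ v₁] at h₄ ⊢
  exact cs.length_mul_and_length_mul_mul_of_length_mul_mul h₄ hw₃v₁v₂
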